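/- arXiv:1905.11380 — 5 statements merged into one kernel-verified Lean document; each statement's English description precedes it below -/
import Mathlib

section
/- If m ≥ 3 is odd and n is even with 3 ≤ n ≤ m−2, then the coloring of K_{n+m−1} in which edge {v_i, v_j} is blue iff the circular distance between i and j modulo n+m−1 is at most (m−1)/2 contains no red K_{1,n} and no blue K_{1,m}+e. -/
/-!
Every vertex `v` is blue-adjacent exactly to the vertices at forward offset `1, …, k` or
`N - k, …, N - 1` from `v`, where `N = n + m - 1` and `k = (m - 1) / 2`. Hence the blue degree is
at most `2k = m - 1 < m` and the red degree at most `N - 1 - 2k = n - 1 < n`, while a copy of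
`K_{1,n}` (or of `K_{1,m}+e ⊇ K_{1,m}`) in a graph needs a vertex of degree at least `n`
(resp. `m`).
-/

open SimpleGraph

/-- `Contains G H` : the graph `G` contains a copy of `H`. -/
def Contains {V W : Type*} (G : SimpleGraph V) (H : SimpleGraph W) : Prop :=
  ∃ f : W → V, Function.Injective f ∧ ∀ a b, H.Adj a b → G.Adj (f a) (f b)

/-- The star `K_{1,n}` on `n+1` vertices: vertex `0` is joined to all others. -/
def starG (n : ℕ) : SimpleGraph (Fin (n + 1)) :=
  SimpleGraph.fromRel (fun a _ => a = 0)

/-- `K_{1,m}+e` on `m+1` vertices: vertex `0` joined to all others, plus the edge `{1,2}`. -/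
def starPlusE (m : ℕ) : SimpleGraph (Fin (m + 1)) :=
  SimpleGraph.fromRel (fun a b => a = 0 ∨ (a = 1 ∧ b = 2))

section Stars

variable {V W : Type*} {G : SimpleGraph V}

lemma Contains.mono_right {H H' : SimpleGraph W} (h : Contains G H') (hle : H ≤ H') :
    Contains G H := by
  obtain ⟨f, hf, hadj⟩ := h
  exact ⟨f, hf, fun a b hab => hadj a b (hle hab)⟩

lemma starG_le_starPlusE (m : ℕ) : starG m ≤ starPlusE m := by
  intro a b hab
  simp only [starG, starPlusE, fromRel_adj] at hab ⊢
  tauto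

lemma Contains.exists_le_ncard_neighborSet [Finite V] {n : ℕ} (h : Contains G (starG n)) :
    ∃ v, n ≤ (G.neighborSet v).ncard := by
  obtain ⟨f, hf, hadj⟩ := h
  refine ⟨f 0, ?_⟩
  have hleaves : ({0}ᶜ : Set (Fin (n + 1))).ncard = n := by
    rw [Set.ncard_compl, Set.ncard_singleton, Nat.card_eq_fintype_card, Fintype.card_fin,
      Nat.add_sub_cancel]
  refine hleaves.symm.le.trans <| Set.ncard_le_ncard_of_injOn f (fun i hi => hadj 0 i ?_) hf.injOn
  simpa [starG, eq_comm] using hi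

end Stars

section Circulant

variable {N : ℕ}

def circDist (a b : Fin N) : ℕ :=
  min ((a.val + N - b.val) % N) ((b.val + N - a.val) % N)

/-- Position of `b` when walking forward around the cycle from `a`. -/
def offset (a b : Fin N) : ℕ :=
  (b.val + N - a.val) % N

def circDistGraph (N k : ℕ) : SimpleGraph (Fin N) :=
  fromRel fun a b => circDist a b ≤ k

lemma add_sub_mod_eq_ite {a b : ℕ} (ha : a < N) (hb : b < N) :
    (a + N - b) % N = if b ≤ a then a - b else a + N - b := by
  split_ifs with h
  · rw [show a + N - b = a - b + N by omega, Nat.add_mod_right, Nat.mod_eq_of_lt (by omega)]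
  · exact Nat.mod_eq_of_lt (by omega)

lemma offset_eq_ite (a b : Fin N) :
    offset a b = if a.val ≤ b.val then b.val - a.val else b.val + N - a.val :=
  add_sub_mod_eq_ite b.isLt a.isLt

lemma offset_injective (a : Fin N) : Function.Injective (offset a) := by
  intro b c h
  have := a.isLt; have := b.isLt; have := c.isLt
  rw [offset_eq_ite, offset_eq_ite] at h
  ext
  split_ifs at h <;> omega

lemma circDist_eq_min_offset (a b : Fin N) :
    circDist a b = min (offset b a) (offset a b) := rfl

lemma offset_lt (a b : Fin N) : offset a b < N :=
  Nat.mod_lt _ a.pos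

lemma offset_pos {a b : Fin N} (hab : a ≠ b) : 0 < offset a b := by
  have := Fin.val_ne_of_ne hab; have := a.isLt; have := b.isLt
  rw [offset_eq_ite]
  split_ifs <;> omega

lemma circDist_le_iff {a b : Fin N} (hab : a ≠ b) {k : ℕ} :
    circDist a b ≤ k ↔ offset a b ≤ k ∨ N - k ≤ offset a b := by
  have := Fin.val_ne_of_ne hab; have := a.isLt; have := b.isLt
  rw [circDist_eq_min_offset, offset_eq_ite, offset_eq_ite, min_le_iff]
  split_ifs <;> omega

lemma circDistGraph_adj {k : ℕ} {a b : Fin N} :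
    (circDistGraph N k).Adj a b ↔ a ≠ b ∧ circDist a b ≤ k := by
  simp only [circDistGraph, fromRel_adj, circDist, min_comm ((b.val + N - a.val) % N), or_self]

lemma ncard_neighborSet_circDistGraph_le (k : ℕ) (v : Fin N) :
    ((circDistGraph N k).neighborSet v).ncard ≤ 2 * k := by
  have := v.pos
  calc ((circDistGraph N k).neighborSet v).ncard
      ≤ (↑(Finset.Icc 1 k ∪ Finset.Icc (N - k) (N - 1)) : Set ℕ).ncard := by
        refine Set.ncard_le_ncard_of_injOn (offset v) (fun u hu => ?_) (offset_injective v).injOn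
        obtain ⟨hvu, hnear⟩ := circDistGraph_adj.mp hu
        have := (circDist_le_iff hvu).mp hnear
        have := offset_pos hvu; have := offset_lt v u
        simp only [Finset.coe_union, Finset.coe_Icc, Set.mem_union, Set.mem_Icc]
        omega
    _ ≤ 2 * k := by
        rw [Set.ncard_coe_finset]
        refine (Finset.card_union_le _ _).trans ?_
        simp only [Nat.card_Icc]
        omega

lemma ncard_neighborSet_compl_circDistGraph_le (k : ℕ) (v : Fin N) :
    ((circDistGraph N k)ᶜ.neighborSet v).ncard ≤ N - 2 * k - 1 := by
  calc ((circDistGraph N k)ᶜ.neighborSet v).ncard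
      ≤ (↑(Finset.Icc (k + 1) (N - k - 1)) : Set ℕ).ncard := by
        refine Set.ncard_le_ncard_of_injOn (offset v) (fun u hu => ?_) (offset_injective v).injOn
        obtain ⟨hvu, hfar⟩ := (compl_adj _ _ _).mp hu
        have := mt (circDist_le_iff hvu).mpr (fun h => hfar (circDistGraph_adj.mpr ⟨hvu, h⟩))
        have := offset_lt v u
        simp only [Finset.coe_Icc, Set.mem_Icc]
        omega
    _ ≤ N - 2 * k - 1 := by
        rw [Set.ncard_coe_finset, Nat.card_Icc]
        omega

end Circulant

theorem stmt_6_general (n m : ℕ) (hmodd : Odd m) (hn : 3 ≤ n) :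
    ¬ Contains (SimpleGraph.fromRel (fun a b : Fin (n + m - 1) =>
        min ((a.val + (n + m - 1) - b.val) % (n + m - 1))
            ((b.val + (n + m - 1) - a.val) % (n + m - 1)) ≤ (m - 1) / 2))ᶜ (starG n) ∧
    ¬ Contains (SimpleGraph.fromRel (fun a b : Fin (n + m - 1) =>
        min ((a.val + (n + m - 1) - b.val) % (n + m - 1))
            ((b.val + (n + m - 1) - a.val) % (n + m - 1)) ≤ (m - 1) / 2))
      (starPlusE m) := by
  obtain ⟨k, rfl⟩ := hmodd
  rw [show (2 * k + 1 - 1) / 2 = k by omega]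
  refine ⟨fun h => ?_, fun h => ?_⟩
  · obtain ⟨v, hv⟩ := Contains.exists_le_ncard_neighborSet (G := (circDistGraph _ k)ᶜ) h
    have := ncard_neighborSet_compl_circDistGraph_le k v
    omega
  · obtain ⟨v, hv⟩ := Contains.exists_le_ncard_neighborSet (G := circDistGraph _ k)
      (h.mono_right (starG_le_starPlusE _))
    have := ncard_neighborSet_circDistGraph_le k v
    omega

theorem stmt_6 (n m : ℕ) (hmodd : Odd m) (hm : 3 ≤ m) (hne : Even n) (hn : 3 ≤ n)
    (hnm : n + 2 ≤ m) :
    ¬ Contains (SimpleGraph.fromRel (fun a b : Fin (n + m - 1) =>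
        min ((a.val + (n + m - 1) - b.val) % (n + m - 1))
            ((b.val + (n + m - 1) - a.val) % (n + m - 1)) ≤ (m - 1) / 2))ᶜ (starG n) ∧
    ¬ Contains (SimpleGraph.fromRel (fun a b : Fin (n + m - 1) =>
        min ((a.val + (n + m - 1) - b.val) % (n + m - 1))
            ((b.val + (n + m - 1) - a.val) % (n + m - 1)) ≤ (m - 1) / 2))
      (starPlusE m) :=
  stmt_6_general n m hmodd hn
end

section
/- For n ≥ 3 and 3 ≤ m ≤ n+2, the red/blue coloring of K_{2n} whose red graph is the disjoint union 2K_n of two complete graphs on n vertices and whose blue graph is the complete bipartite graph K_{n,n} contains no red K_{1,n} and no blue K_{1,m}+e. -/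
open SimpleGraph

/-!
In the red graph `2K_n` the closed neighbourhood of a vertex is its own side, which has only `n`
vertices, one too few for `K_{1,n}`. The blue graph `K_{n,n}` is bipartite, hence triangle-free,
whereas `K_{1,m}+e` contains a triangle.
-/

theorem contains_iff_isContained {V W : Type*} {G : SimpleGraph V} {H : SimpleGraph W} :
    Contains G H ↔ H ⊑ G :=
  ⟨fun ⟨f, hf, hadj⟩ => ⟨⟨⟨f, hadj _ _⟩, hf⟩⟩, fun ⟨c⟩ => ⟨c, c.injective, fun _ _ => c.toHom.map_adj⟩⟩

theorem starG_adj_zero {n : ℕ} {i : Fin (n + 1)} (hi : i ≠ 0) : (starG n).Adj 0 i := by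
  simp [starG, hi.symm]

theorem not_cliqueFree_three_starPlusE {m : ℕ} (hm : 2 ≤ m) : ¬ (starPlusE m).CliqueFree 3 := by
  obtain ⟨k, rfl⟩ := Nat.exists_eq_add_of_le' hm
  refine IsNClique.not_cliqueFree (s := {0, 1, 2}) (is3Clique_triple_iff.2 ?_)
  simp only [starPlusE, fromRel_adj]
  refine ⟨⟨?_, ?_⟩, ⟨?_, ?_⟩, ⟨?_, ?_⟩⟩ <;> simp [Fin.ext_iff, Nat.mod_eq_of_lt]

section SameSide

variable {V : Type*} (P : V → Prop)

theorem card_lt_of_contains_starG [Finite V] {n : ℕ}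
    (h : Contains (fromRel fun a b => (P a ↔ P b)) (starG n)) :
    n < Nat.card {v // P v} ∨ n < Nat.card {v // ¬ P v} := by
  obtain ⟨f, hf, hadj⟩ := h
  have hside (i : Fin (n + 1)) : P (f i) ↔ P (f 0) := by
    rcases eq_or_ne i 0 with rfl | hi
    · rfl
    · have := hadj 0 i (starG_adj_zero hi)
      simp only [fromRel_adj] at this
      tauto
  by_cases h0 : P (f 0)
  · left
    simpa using Nat.card_le_card_of_injective (fun i => (⟨f i, (hside i).2 h0⟩ : {v // P v}))
      fun i j hij => hf (congrArg Subtype.val hij)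
  · right
    simpa using Nat.card_le_card_of_injective (fun i => (⟨f i, mt (hside i).1 h0⟩ : {v // ¬ P v}))
      fun i j hij => hf (congrArg Subtype.val hij)

theorem cliqueFree_three_compl_fromRel_iff : (fromRel fun a b => (P a ↔ P b))ᶜ.CliqueFree 3 := by
  classical
  refine (Coloring.mk (fun v => decide (P v)) fun {v w} hvw => ?_).colorable.cliqueFree (by simp)
  simp only [compl_adj, fromRel_adj] at hvw
  by_cases P v <;> by_cases P w <;> simp_all

end SameSide

theorem Fin.natCard_val_lt_two_mul (n : ℕ) : Nat.card {v : Fin (2 * n) // v.val < n} = n := by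
  simp [Nat.card_eq_fintype_card, Fintype.card_subtype, Fin.card_filter_val_lt, two_mul]

theorem Fin.natCard_not_val_lt_two_mul (n : ℕ) :
    Nat.card {v : Fin (2 * n) // ¬ v.val < n} = n := by
  rw [Nat.card_eq_fintype_card, Fintype.card_subtype_compl, ← Nat.card_eq_fintype_card,
    ← Nat.card_eq_fintype_card, Fin.natCard_val_lt_two_mul, Nat.card_eq_fintype_card,
    Fintype.card_fin]
  omega

theorem stmt_7_general (n m : ℕ) (hm : 3 ≤ m) :
    ¬ Contains (SimpleGraph.fromRel (fun a b : Fin (2 * n) =>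
        (a.val < n ↔ b.val < n))) (starG n) ∧
    ¬ Contains (SimpleGraph.fromRel (fun a b : Fin (2 * n) =>
        (a.val < n ↔ b.val < n)))ᶜ (starPlusE m) := by
  refine ⟨fun h => ?_, fun h => ?_⟩
  · have := card_lt_of_contains_starG (fun v : Fin (2 * n) => v.val < n) h
    rw [Fin.natCard_val_lt_two_mul, Fin.natCard_not_val_lt_two_mul] at this
    omega
  · exact not_cliqueFree_three_starPlusE (by omega)
      ((cliqueFree_three_compl_fromRel_iff _).comap (contains_iff_isContained.1 h))

theorem stmt_7 (n m : ℕ) (hn : 3 ≤ n) (hm : 3 ≤ m) (hmn : m ≤ n + 2) :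
    ¬ Contains (SimpleGraph.fromRel (fun a b : Fin (2 * n) =>
        (a.val < n ↔ b.val < n))) (starG n) ∧
    ¬ Contains (SimpleGraph.fromRel (fun a b : Fin (2 * n) =>
        (a.val < n ↔ b.val < n)))ᶜ (starPlusE m) :=
  stmt_7_general n m hm
end

section
/- For n ≥ 3 and m ≥ 3 with n > m−2, every red/blue coloring of K_{2n+1} contains a red K_{1,n} or a blue K_{1,m}+e. -/
open SimpleGraph

/-! If there is no red `K_{1,n}`, every vertex has red degree at most `n - 1`, so vertex `0` has a
blue neighbourhood `N` of size at least `n + 1`. A blue edge inside `N`, together with the blue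
edges from `0` to `m - 2` further vertices of `N`, is a blue `K_{1,m}+e`; otherwise `N` is a red
clique on at least `n + 1` vertices, which contains a red `K_{1,n}`. -/

variable {V : Type*} {G : SimpleGraph V} {n k : ℕ}

lemma Finset.exists_injective_fin_mem {s : Finset V} (h : k ≤ s.card) :
    ∃ f : Fin k → V, Function.Injective f ∧ ∀ i, f i ∈ s := by
  obtain ⟨e⟩ := Function.Embedding.nonempty_of_card_le (α := Fin k) (β := s) (by simpa using h)
  exact ⟨(↑) ∘ e, Subtype.val_injective.comp e.injective, fun i => (e i).2⟩

lemma contains_starG_of_adj {v : V} {f : Fin n → V} (hf : Function.Injective f)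
    (hadj : ∀ i, G.Adj v (f i)) : Contains G (starG n) := by
  refine ⟨Fin.cons v f, Fin.cons_injective_iff.2 ⟨?_, hf⟩, ?_⟩
  · rintro ⟨i, hi⟩
    exact (hadj i).ne hi.symm
  · intro a b hab
    cases a using Fin.cases <;> cases b using Fin.cases <;> simp_all [starG, G.adj_comm]

lemma contains_starG_of_le_card {v : V} {s : Finset V} (hs : n ≤ s.card)
    (hadj : ∀ x ∈ s, G.Adj v x) : Contains G (starG n) := by
  obtain ⟨f, hf, hfs⟩ := s.exists_injective_fin_mem hs
  exact contains_starG_of_adj hf fun i => hadj _ (hfs i)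

lemma contains_starPlusE_of_adj {v u w : V} {f : Fin k → V} (hf : Function.Injective f)
    (hu : u ∉ Set.range f) (hw : w ∉ Set.range f) (huw : G.Adj u w) (hvu : G.Adj v u)
    (hvw : G.Adj v w) (hadj : ∀ i, G.Adj v (f i)) : Contains G (starPlusE (k + 2)) := by
  refine ⟨Fin.cons v (Fin.cons u (Fin.cons w f)), ?_, ?_⟩
  · simp only [Fin.cons_injective_iff, Fin.range_cons, Set.mem_insert_iff, not_or]
    exact ⟨⟨hvu.ne, hvw.ne, fun ⟨i, hi⟩ => (hadj i).ne hi.symm⟩, ⟨huw.ne, hu⟩, hw, hf⟩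
  · intro a b hab
    have hv : ∀ j, G.Adj v ((Fin.cons u (Fin.cons w f) : Fin (k + 2) → V) j) :=
      Fin.cases hvu (Fin.cases hvw hadj)
    rw [starPlusE, fromRel_adj] at hab
    rcases hab with ⟨hne, (rfl | ⟨rfl, rfl⟩) | (rfl | ⟨rfl, rfl⟩)⟩
    · cases b using Fin.cases
      · exact absurd rfl hne
      · exact hv _
    · exact huw
    · cases a using Fin.cases
      · exact absurd rfl hne
      · exact (hv _).symm
    · exact huw.symm

lemma contains_starPlusE_of_le_card {v u w : V} {s : Finset V} (hs : k + 2 ≤ s.card)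
    (hadj : ∀ x ∈ s, G.Adj v x) (hu : u ∈ s) (hw : w ∈ s) (huw : G.Adj u w) :
    Contains G (starPlusE (k + 2)) := by
  classical
  have hcard : k ≤ (s \ {u, w}).card := by
    have := Finset.card_le_two (a := u) (b := w)
    have := Finset.le_card_sdiff {u, w} s
    omega
  obtain ⟨f, hf, hfs⟩ := (s \ {u, w}).exists_injective_fin_mem hcard
  have hf_mem (i : Fin k) : f i ∈ s ∧ f i ≠ u ∧ f i ≠ w := by simpa [not_or] using hfs i
  exact contains_starPlusE_of_adj hf (fun ⟨i, hi⟩ => (hf_mem i).2.1 hi)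
    (fun ⟨i, hi⟩ => (hf_mem i).2.2 hi) huw (hadj u hu) (hadj w hw) fun i => hadj _ (hf_mem i).1

lemma card_sub_le_degree_compl_of_not_contains_starG [Fintype V] [DecidableEq V]
    [DecidableRel G.Adj] (h : ¬Contains G (starG n)) (v : V) :
    Fintype.card V - n ≤ Gᶜ.degree v := by
  have : G.degree v < n := by
    by_contra! hle
    exact h (contains_starG_of_le_card hle fun x => (G.mem_neighborFinset v x).1)
  rw [degree_compl]
  omega

theorem stmt_8_general (n m : ℕ) (hm : 3 ≤ m) (hmn : m < n + 2)
    (R : SimpleGraph (Fin (2 * n + 1))) :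
    Contains R (starG n) ∨ Contains Rᶜ (starPlusE m) := by
  classical
  obtain ⟨k, rfl⟩ : ∃ k, m = k + 2 := ⟨m - 2, by omega⟩
  by_contra! ⟨hred, hblue⟩
  set N := Rᶜ.neighborFinset 0
  have hN : n + 1 ≤ N.card := by
    have := card_sub_le_degree_compl_of_not_contains_starG hred 0
    rw [Fintype.card_fin] at this
    rw [card_neighborFinset_eq_degree]
    omega
  have hN_clique : ∀ u ∈ N, ∀ w ∈ N, u ≠ w → R.Adj u w := by
    intro u hu w hw huw
    by_contra hRuw
    exact hblue (contains_starPlusE_of_le_card (s := N) (by omega)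
      (fun x => (Rᶜ.mem_neighborFinset 0 x).1) hu hw ((R.compl_adj u w).2 ⟨huw, hRuw⟩))
  obtain ⟨u, hu⟩ := N.card_pos.1 (by omega)
  refine hred (contains_starG_of_le_card (v := u) (s := N.erase u) ?_ fun x hx => ?_)
  · rw [Finset.card_erase_of_mem hu]
    omega
  · exact hN_clique u hu x (Finset.mem_of_mem_erase hx) (Finset.ne_of_mem_erase hx).symm

theorem stmt_8 (n m : ℕ) (hn : 3 ≤ n) (hm : 3 ≤ m) (hmn : m < n + 2)
    (R : SimpleGraph (Fin (2 * n + 1))) :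
    Contains R (starG n) ∨ Contains Rᶜ (starPlusE m) :=
  stmt_8_general n m hm hmn R
end

section
/- For n, m ≥ 3 with n > m−2, r(K_{1,n}, K_{1,m}+e) = 2n+1. -/
open SimpleGraph

/-!
Upper bound: on `2n+1` vertices, if no vertex has `n` red neighbours then every vertex has at
least `n+1` blue neighbours, so two blue-adjacent vertices `u, v` have a common blue neighbour `w`,
and `u` has `n - 1 ≥ m - 2` further blue neighbours, completing a blue `K_{1,m}+e` centred at `u`.

Lower bound: on `N ≤ 2n` vertices, colour red exactly the edges inside the two halves
`{i < n}` and `{i ≥ n}`. Each half has at most `n` vertices, so red degrees are below `n`, and the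
blue graph is bipartite, hence triangle-free, while `K_{1,m}+e` contains a triangle.
-/

open Finset

variable {V : Type*}

lemma Finset.exists_injective_fin_of_le_card {α : Type*} {s : Finset α} {k : ℕ} (h : k ≤ #s) :
    ∃ g : Fin k → α, Function.Injective g ∧ ∀ i, g i ∈ s :=
  ⟨fun i => s.equivFin.symm (Fin.castLE h i),
    fun _ _ hij => Fin.castLE_injective h (s.equivFin.symm.injective (Subtype.ext hij)),
    fun i => (s.equivFin.symm (Fin.castLE h i)).2⟩

lemma starG_adj_iff {n : ℕ} {a b : Fin (n + 1)} :
    (starG n).Adj a b ↔ a ≠ b ∧ (a = 0 ∨ b = 0) := by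
  simp [starG, fromRel_adj]

lemma starPlusE_adj_zero_succ {m : ℕ} (i : Fin m) : (starPlusE m).Adj 0 i.succ := by
  simp [starPlusE, fromRel_adj, (Fin.succ_ne_zero i).symm]

lemma starPlusE_adj_one_two (k : ℕ) : (starPlusE (k + 2)).Adj 1 2 := by
  rw [starPlusE, fromRel_adj]
  exact ⟨by simp [Fin.ext_iff, Nat.mod_eq_of_lt (show 2 < k + 2 + 1 by omega)], by simp⟩

lemma contains_starG_iff [Fintype V] (G : SimpleGraph V) [DecidableRel G.Adj] {n : ℕ} :
    Contains G (starG n) ↔ ∃ v, n ≤ G.degree v := by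
  constructor
  · rintro ⟨f, hf, hadj⟩
    refine ⟨f 0, ?_⟩
    calc n = #(univ.map ⟨f ∘ Fin.succ, hf.comp (Fin.succ_injective _)⟩) := by simp
      _ ≤ G.degree (f 0) := card_le_card fun x hx => by
          obtain ⟨i, -, rfl⟩ := mem_map.1 hx
          exact (mem_neighborFinset G _ _).2
            (hadj _ _ (starG_adj_iff.2 ⟨(Fin.succ_ne_zero i).symm, Or.inl rfl⟩))
  · rintro ⟨v, hv⟩
    obtain ⟨g, hg, hgN⟩ := (G.neighborFinset v).exists_injective_fin_of_le_card hv
    have hadj : ∀ i, G.Adj v (g i) := fun i => (mem_neighborFinset G _ _).1 (hgN i)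
    refine ⟨Fin.cons v g, Fin.cons_injective_iff.2 ⟨?_, hg⟩, fun a b hab => ?_⟩
    · rintro ⟨i, hi⟩
      exact (hadj i).ne hi.symm
    obtain ⟨hne, rfl | rfl⟩ := starG_adj_iff.1 hab
    · obtain ⟨j, rfl⟩ := Fin.exists_succ_eq.2 hne.symm
      simpa using hadj j
    · obtain ⟨j, rfl⟩ := Fin.exists_succ_eq.2 hne
      simpa using (hadj j).symm

lemma contains_starPlusE_of_adj_of_le_degree [Fintype V] {G : SimpleGraph V} [DecidableRel G.Adj]
    {m : ℕ} (hm : 2 ≤ m) {u v w : V} (huv : G.Adj u v) (huw : G.Adj u w) (hvw : G.Adj v w)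
    (hdeg : m ≤ G.degree u) : Contains G (starPlusE m) := by
  classical
  obtain ⟨k, rfl⟩ := Nat.exists_eq_add_of_le' hm
  have hv : v ∈ G.neighborFinset u := (mem_neighborFinset G _ _).2 huv
  have hw : w ∈ (G.neighborFinset u).erase v :=
    mem_erase.2 ⟨hvw.ne', (mem_neighborFinset G _ _).2 huw⟩
  have hk : k ≤ #(((G.neighborFinset u).erase v).erase w) := by
    rw [card_erase_of_mem hw, card_erase_of_mem hv, card_neighborFinset_eq_degree]
    omega
  obtain ⟨g, hg, hgs⟩ := exists_injective_fin_of_le_card hk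
  set h : Fin (k + 2) → V := Fin.cons v (Fin.cons w g)
  have hadj : ∀ i, G.Adj u (h i) := by
    refine Fin.cases huv (Fin.cases huw fun i => ?_)
    simpa [h] using mem_of_mem_erase (mem_of_mem_erase (hgs i))
  have hh : Function.Injective h := by
    refine Fin.cons_injective_iff.2 ⟨?_, Fin.cons_injective_iff.2 ⟨?_, hg⟩⟩
    · rintro ⟨i, hi⟩
      induction i using Fin.cases with
      | zero => exact hvw.ne' hi
      | succ j => exact ne_of_mem_erase (mem_of_mem_erase (hgs j)) hi
    · rintro ⟨i, hi⟩
      exact ne_of_mem_erase (hgs i) hi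
  refine ⟨Fin.cons u h, Fin.cons_injective_iff.2 ⟨fun ⟨i, hi⟩ => (hadj i).ne hi.symm, hh⟩,
    fun a b hab => ?_⟩
  simp only [starPlusE, fromRel_adj] at hab
  obtain ⟨hne, (rfl | ⟨rfl, rfl⟩) | (rfl | ⟨rfl, rfl⟩)⟩ := hab
  · obtain ⟨j, rfl⟩ := Fin.exists_succ_eq.2 hne.symm
    simpa using hadj j
  · exact hvw
  · obtain ⟨j, rfl⟩ := Fin.exists_succ_eq.2 hne
    simpa using (hadj j).symm
  · exact hvw.symm

lemma SimpleGraph.exists_adj_adj_of_card_lt_degree_add_degree [Fintype V] (G : SimpleGraph V)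
    [DecidableRel G.Adj] {u v : V} (h : Fintype.card V < G.degree u + G.degree v) :
    ∃ w, G.Adj u w ∧ G.Adj v w := by
  rw [← card_neighborFinset_eq_degree, ← card_neighborFinset_eq_degree, ← card_univ] at h
  classical
  obtain ⟨w, hw⟩ := inter_nonempty_of_card_lt_card_add_card (subset_univ _) (subset_univ _) h
  simp only [mem_inter, mem_neighborFinset] at hw
  exact ⟨w, hw⟩

theorem contains_starG_or_compl_contains_starPlusE [Fintype V] (R : SimpleGraph V) {n m : ℕ}
    (hV : 2 * n + 1 ≤ Fintype.card V) (hm : 2 ≤ m) (hmn : m ≤ n + 1) :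
    Contains R (starG n) ∨ Contains Rᶜ (starPlusE m) := by
  classical
  rw [or_iff_not_imp_left, contains_starG_iff]
  push Not
  intro hR
  have hdeg : ∀ v, Fintype.card V - n ≤ Rᶜ.degree v := fun v => by
    have := R.degree_compl v
    have := hR v
    omega
  obtain ⟨u⟩ : Nonempty V := Fintype.card_pos_iff.1 (by omega)
  obtain ⟨v, huv⟩ := Rᶜ.degree_pos_iff_exists_adj u |>.1 (by have := hdeg u; omega)
  obtain ⟨w, huw, hvw⟩ := Rᶜ.exists_adj_adj_of_card_lt_degree_add_degree
    (by have := hdeg u; have := hdeg v; omega : Fintype.card V < Rᶜ.degree u + Rᶜ.degree v)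
  exact contains_starPlusE_of_adj_of_le_degree hm huv huw hvw (by have := hdeg u; omega)

lemma not_contains_starPlusE_of_cliqueFree {G : SimpleGraph V} (hG : G.CliqueFree 3) {m : ℕ}
    (hm : 2 ≤ m) : ¬ Contains G (starPlusE m) := by
  classical
  obtain ⟨k, rfl⟩ := Nat.exists_eq_add_of_le' hm
  rintro ⟨f, -, hf⟩
  refine hG {f 0, f 1, f 2} (is3Clique_triple_iff.2 ⟨?_, ?_, ?_⟩)
  · exact hf _ _ (starPlusE_adj_zero_succ 0)
  · exact hf _ _ (starPlusE_adj_zero_succ 1)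
  · exact hf _ _ (starPlusE_adj_one_two k)

lemma degree_compl_comap_top_lt [Fintype V] [DecidableEq V] {α : Type*} [DecidableEq α]
    (c : V → α) {n : ℕ} (hc : ∀ a, #{v | c v = a} ≤ n) (v : V) :
    ((⊤ : SimpleGraph α).comap c)ᶜ.degree v < n := by
  refine (card_lt_card ((ssubset_iff_of_subset fun x hx => ?_).2 ⟨v, ?_, ?_⟩)).trans_le
    (hc (c v))
  · simp only [mem_neighborFinset, compl_adj, comap_adj, top_adj, not_not] at hx
    simpa using hx.2.symm
  · simp
  · simp

lemma card_filter_decide_val_lt_eq_le {N n : ℕ} (hN : N ≤ 2 * n) (b : Bool) :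
    #{i : Fin N | decide ((i : ℕ) < n) = b} ≤ n := by
  cases b
  · calc _ ≤ #(Ico n N) := card_le_card_of_injOn Fin.val (fun i hi => by simp_all)
          Fin.val_injective.injOn
      _ ≤ n := by simp; omega
  · calc _ ≤ #(range n) := card_le_card_of_injOn Fin.val (fun i hi => by simp_all)
          Fin.val_injective.injOn
      _ = n := card_range n

theorem exists_not_contains_starG_not_compl_contains_starPlusE {N n m : ℕ} (hN : N ≤ 2 * n)
    (hm : 2 ≤ m) :
    ∃ R : SimpleGraph (Fin N), ¬ Contains R (starG n) ∧ ¬ Contains Rᶜ (starPlusE m) := by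
  set c : Fin N → Bool := fun i => decide ((i : ℕ) < n)
  refine ⟨((⊤ : SimpleGraph Bool).comap c)ᶜ, ?_, ?_⟩
  · rw [contains_starG_iff]
    push Not
    exact degree_compl_comap_top_lt c (card_filter_decide_val_lt_eq_le hN)
  · rw [compl_compl]
    exact not_contains_starPlusE_of_cliqueFree
      ((Coloring.mk c fun h => h).colorable.cliqueFree (by simp)) hm

theorem stmt_9_general (n m : ℕ) (hm : 3 ≤ m) (hmn : m < n + 2) :
    IsLeast {N : ℕ | ∀ R : SimpleGraph (Fin N),
      Contains R (starG n) ∨ Contains Rᶜ (starPlusE m)} (2 * n + 1) := by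
  refine ⟨fun R => contains_starG_or_compl_contains_starPlusE R (by simp) (by omega) (by omega),
    fun N hN => ?_⟩
  by_contra! hlt
  obtain ⟨R, hred, hblue⟩ := exists_not_contains_starG_not_compl_contains_starPlusE (m := m)
    (show N ≤ 2 * n by omega) (by omega)
  exact (hN R).elim hred hblue

theorem stmt_9 (n m : ℕ) (hn : 3 ≤ n) (hm : 3 ≤ m) (hmn : m < n + 2) :
    IsLeast {N : ℕ | ∀ R : SimpleGraph (Fin N),
      Contains R (starG n) ∨ Contains Rᶜ (starPlusE m)} (2 * n + 1) :=
  stmt_9_general n m hm hmn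
end

section
/- Suppose a red/blue coloring of K_{n+m−1} has no red K_{1,n} and no blue K_{1,m}+e, where 3 ≤ n ≤ m−2. Then every vertex has red degree exactly n−1 and blue degree exactly m−1. -/
/-! A red `K_{1,n}` is exactly a vertex of red degree `≥ n`, so every red degree is `≤ n - 1`.
If some vertex `v` had blue degree `≥ m`, then either two of its blue neighbours are joined in
blue, giving a blue `K_{1,m}+e`, or its blue neighbourhood is a red clique on `≥ m > n` vertices,
giving a vertex of red degree `≥ n`. So every blue degree is `≤ m - 1`, and since red and blue
degrees add up to `n + m - 2`, both bounds are attained. -/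

open SimpleGraph

open Finset

namespace SimpleGraph

variable {V : Type*} [Fintype V] (G : SimpleGraph V) [DecidableRel G.Adj]

lemma contains_starG_of_le_degree {n : ℕ} {v : V} (h : n ≤ G.degree v) :
    Contains G (starG n) := by
  obtain ⟨e⟩ : Nonempty (Fin n ↪ G.neighborSet v) :=
    Function.Embedding.nonempty_of_card_le (by rwa [Fintype.card_fin, card_neighborSet_eq_degree])
  let f : Fin (n + 1) → V := Fin.cons v (Subtype.val ∘ e)
  have hv : v ∉ Set.range (Subtype.val ∘ e) := fun ⟨i, hi⟩ => G.ne_of_adj (e i).2 hi.symm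
  refine ⟨f, Fin.cons_injective_iff.2 ⟨hv, Subtype.val_injective.comp e.injective⟩, ?_⟩
  suffices ∀ b : Fin (n + 1), b ≠ 0 → G.Adj (f 0) (f b) by
    rintro a b ⟨hab, (rfl | rfl) | rfl⟩
    exacts [this b hab.symm, (this a hab).symm]
  intro b hb
  cases b using Fin.cases with
  | zero => exact absurd rfl hb
  | succ j => exact (e j).2

lemma degree_lt_of_not_contains_starG {n : ℕ} (h : ¬ Contains G (starG n)) (v : V) :
    G.degree v < n :=
  not_le.1 fun hle => h (G.contains_starG_of_le_degree hle)

lemma contains_starPlusE_of_adj [DecidableEq V] {k : ℕ} {v u w : V} (h : k + 2 ≤ G.degree v)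
    (hu : G.Adj v u) (hw : G.Adj v w) (huw : G.Adj u w) : Contains G (starPlusE (k + 2)) := by
  set s := G.neighborFinset v \ {u, w}
  have hs : k ≤ s.card := by
    rw [card_sdiff_of_subset (by simp [insert_subset_iff, hu, hw]), card_pair huw.ne]
    simp only [card_neighborFinset_eq_degree]; omega
  obtain ⟨e⟩ : Nonempty (Fin k ↪ s) :=
    Function.Embedding.nonempty_of_card_le (by simpa using hs)
  let f : Fin (k + 3) → V := Fin.cons v (Fin.cons u (Fin.cons w (Subtype.val ∘ e)))
  have he : ∀ i, G.Adj v (e i) ∧ (e i : V) ≠ u ∧ (e i : V) ≠ w := fun i => by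
    have := (e i).2
    simp only [s, mem_sdiff, mem_neighborFinset, mem_insert, mem_singleton, not_or] at this
    exact this
  have hinj : Function.Injective f := by
    refine Fin.cons_injective_iff.2 ⟨?_, Fin.cons_injective_iff.2 ⟨?_,
      Fin.cons_injective_iff.2 ⟨?_, Subtype.val_injective.comp e.injective⟩⟩⟩
    all_goals
      simp only [Fin.range_cons, Set.mem_insert_iff, Set.mem_range, Function.comp_apply, not_or]
    · exact ⟨hu.ne, hw.ne, fun ⟨i, hi⟩ => (he i).1.ne hi.symm⟩
    · exact ⟨huw.ne, fun ⟨i, hi⟩ => (he i).2.1 hi⟩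
    · exact fun ⟨i, hi⟩ => (he i).2.2 hi
  have hcenter : ∀ b : Fin (k + 3), b ≠ 0 → G.Adj (f 0) (f b) := by
    intro b hb
    cases b using Fin.cases with
    | zero => exact absurd rfl hb
    | succ b =>
      cases b using Fin.cases with
      | zero => exact hu
      | succ b =>
        cases b using Fin.cases with
        | zero => exact hw
        | succ i => exact (he i).1
  refine ⟨f, hinj, ?_⟩
  rintro a b ⟨hab, (rfl | ⟨rfl, rfl⟩) | rfl | ⟨rfl, rfl⟩⟩
  exacts [hcenter b hab.symm, huw, (hcenter a hab).symm, huw.symm]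

lemma degree_compl_lt_of_not_contains [DecidableEq V] {n m : ℕ} (hnm : n < m)
    (hred : ¬ Contains G (starG n)) (hblue : ¬ Contains Gᶜ (starPlusE m)) (v : V) :
    Gᶜ.degree v < m := by
  have hn := G.degree_lt_of_not_contains_starG hred v
  obtain ⟨k, rfl⟩ : ∃ k, m = k + 2 := ⟨m - 2, by omega⟩
  by_contra! hdeg
  by_cases hedge : ∃ u w, Gᶜ.Adj v u ∧ Gᶜ.Adj v w ∧ Gᶜ.Adj u w
  · obtain ⟨u, w, hu, hw, huw⟩ := hedge
    exact hblue (Gᶜ.contains_starPlusE_of_adj hdeg hu hw huw)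
  push Not at hedge
  obtain ⟨u, hu⟩ := (Gᶜ.degree_pos_iff_exists_adj v).1 (by omega)
  -- The blue neighbourhood of `v` is a red clique, so `u` has red degree at least `k + 1`.
  have hsub : (Gᶜ.neighborFinset v).erase u ⊆ G.neighborFinset u := by
    intro x hx
    rw [mem_erase, mem_neighborFinset] at hx
    rw [mem_neighborFinset]
    by_contra hux
    exact hedge u x hu hx.2 ⟨hx.1.symm, hux⟩
  have hcard := card_le_card hsub
  rw [card_erase_of_mem ((mem_neighborFinset _ _ _).2 hu), card_neighborFinset_eq_degree,
    card_neighborFinset_eq_degree] at hcard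
  have := G.degree_lt_of_not_contains_starG hred u
  omega

end SimpleGraph

theorem stmt_18_general (n m : ℕ) (hnm : n + 2 ≤ m)
    (R : SimpleGraph (Fin (n + m - 1)))
    (hred : ¬ Contains R (starG n)) (hblue : ¬ Contains Rᶜ (starPlusE m)) :
    ∀ v : Fin (n + m - 1),
      (R.neighborSet v).ncard = n - 1 ∧ (Rᶜ.neighborSet v).ncard = m - 1 := by
  classical
  intro v
  have hred_deg := R.degree_lt_of_not_contains_starG hred v
  have hblue_deg := R.degree_compl_lt_of_not_contains (by omega) hred hblue v
  have hsum := R.degree_compl v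
  rw [Fintype.card_fin] at hsum
  simp only [← Nat.card_coe_set_eq, Nat.card_eq_fintype_card, card_neighborSet_eq_degree]
  omega

theorem stmt_18 (n m : ℕ) (hn : 3 ≤ n) (hnm : n + 2 ≤ m)
    (R : SimpleGraph (Fin (n + m - 1)))
    (hred : ¬ Contains R (starG n)) (hblue : ¬ Contains Rᶜ (starPlusE m)) :
    ∀ v : Fin (n + m - 1),
      (R.neighborSet v).ncard = n - 1 ∧ (Rᶜ.neighborSet v).ncard = m - 1 :=
  stmt_18_general n m hnm R hred hblue
end
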